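/- Let α₁, α₂, β₁, β₂ be nonzero complex numbers. Define the 4×4 matrices R (with rows as follows: row 1 = (1, λ₋₊₊₊λ₊₋₊₊/(4λ₊₀₀₀λ₀₊₀₀), λ₊₋₊₊/(2λ₊₀₀₀), λ₋₊₊₊/(2λ₀₊₀₀)); row 2 = (1, λ₊₊₋₊λ₊₊₊₋/(4λ₀₀₊₀λ₀₀₀₊), λ₊₊₊₋/(2λ₀₀₊₀), λ₊₊₋₊/(2λ₀₀₀₊)); row 3 = (1, λ₋₊₊₊λ₊₊₊₋/(4λ₊₀₀₀λ₀₀₀₊), λ₊₊₊₋/(2λ₊₀₀₀), λ₋₊₊₊/(2λ₀₀₀₊)); row 4 = (1, λ₊₋₊₊λ₊₊₋₊/(4λ₀₊₀₀λ₀₀₊₀), λ₊₋₊₊/(2λ₀₀₊₀), λ₊₊₋₊/(2λ₀₊₀₀))), P = [[1,1,0,0],[0, λ₋₋₋₋, λ₊₋₊₋, 0],[0, λ₋₋₋₋, 0, λ₋₊₋₊],[0, λ₋₋₋₋², 4λ₀₊₀₀λ₀₀₀₊, 4λ₊₀₀₀λ₀₀₊₀]], and V = [[1, 1/α₁, 1/α₂,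 1/(α₁α₂)],[1, 1/β₁, 1/β₂, 1/(β₁β₂)],[1, 1/α₁, 1/β₂, 1/(α₁β₂)],[1, 1/β₁, 1/α₂, 1/(β₁α₂)]]. Then R = V·P (equivalently, when P is invertible, R·P⁻¹ = V). -/
import Mathlib


set_option maxHeartbeats 1000000
set_option synthInstance.maxHeartbeats 1000000
set_option linter.unusedVariables false

noncomputable section
open Matrix

/-- λ_{ι₁ι₂ι₃ι₄} = (ι₁α₁ + ι₂α₂ + ι₃β₁ + ι₄β₂)/2 with ι_j ∈ {1, −1, 0}. -/
def lam (α₁ α₂ β₁ β₂ : ℂ) (i j k l : ℤ) : ℂ :=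
  ((i : ℂ) * α₁ + (j : ℂ) * α₂ + (k : ℂ) * β₁ + (l : ℂ) * β₂) / 2

/-- The matrix R of left eigenvectors of A₀. -/
def Rmat (α₁ α₂ β₁ β₂ : ℂ) : Matrix (Fin 4) (Fin 4) ℂ :=
  !![1, lam α₁ α₂ β₁ β₂ (-1) 1 1 1 * lam α₁ α₂ β₁ β₂ 1 (-1) 1 1 / (4 * lam α₁ α₂ β₁ β₂ 1 0 0 0 * lam α₁ α₂ β₁ β₂ 0 1 0 0),
       lam α₁ α₂ β₁ β₂ 1 (-1) 1 1 / (2 * lam α₁ α₂ β₁ β₂ 1 0 0 0), lam α₁ α₂ β₁ β₂ (-1) 1 1 1 / (2 * lam α₁ α₂ β₁ β₂ 0 1 0 0);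
     1, lam α₁ α₂ β₁ β₂ 1 1 (-1) 1 * lam α₁ α₂ β₁ β₂ 1 1 1 (-1) / (4 * lam α₁ α₂ β₁ β₂ 0 0 1 0 * lam α₁ α₂ β₁ β₂ 0 0 0 1),
       lam α₁ α₂ β₁ β₂ 1 1 1 (-1) / (2 * lam α₁ α₂ β₁ β₂ 0 0 1 0), lam α₁ α₂ β₁ β₂ 1 1 (-1) 1 / (2 * lam α₁ α₂ β₁ β₂ 0 0 0 1);
     1, lam α₁ α₂ β₁ β₂ (-1) 1 1 1 * lam α₁ α₂ β₁ β₂ 1 1 1 (-1) / (4 * lam α₁ α₂ β₁ β₂ 1 0 0 0 * lam α₁ α₂ β₁ β₂ 0 0 0 1),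
       lam α₁ α₂ β₁ β₂ 1 1 1 (-1) / (2 * lam α₁ α₂ β₁ β₂ 1 0 0 0), lam α₁ α₂ β₁ β₂ (-1) 1 1 1 / (2 * lam α₁ α₂ β₁ β₂ 0 0 0 1);
     1, lam α₁ α₂ β₁ β₂ 1 (-1) 1 1 * lam α₁ α₂ β₁ β₂ 1 1 (-1) 1 / (4 * lam α₁ α₂ β₁ β₂ 0 1 0 0 * lam α₁ α₂ β₁ β₂ 0 0 1 0),
       lam α₁ α₂ β₁ β₂ 1 (-1) 1 1 / (2 * lam α₁ α₂ β₁ β₂ 0 0 1 0), lam α₁ α₂ β₁ β₂ 1 1 (-1) 1 / (2 * lam α₁ α₂ β₁ β₂ 0 1 0 0)]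

/-- The transformation matrix P. -/
def Pmat (α₁ α₂ β₁ β₂ : ℂ) : Matrix (Fin 4) (Fin 4) ℂ :=
  !![1, 1, 0, 0;
     0, lam α₁ α₂ β₁ β₂ (-1) (-1) (-1) (-1), lam α₁ α₂ β₁ β₂ 1 (-1) 1 (-1), 0;
     0, lam α₁ α₂ β₁ β₂ (-1) (-1) (-1) (-1), 0, lam α₁ α₂ β₁ β₂ (-1) 1 (-1) 1;
     0, (lam α₁ α₂ β₁ β₂ (-1) (-1) (-1) (-1))^2, 4 * lam α₁ α₂ β₁ β₂ 0 1 0 0 * lam α₁ α₂ β₁ β₂ 0 0 0 1, 4 * lam α₁ α₂ β₁ β₂ 1 0 0 0 * lam α₁ α₂ β₁ β₂ 0 0 1 0]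

/-- The Vandermonde-type matrix V = RP⁻¹. -/
def Vmat (α₁ α₂ β₁ β₂ : ℂ) : Matrix (Fin 4) (Fin 4) ℂ :=
  !![1, 1/α₁, 1/α₂, 1/(α₁*α₂);
     1, 1/β₁, 1/β₂, 1/(β₁*β₂);
     1, 1/α₁, 1/β₂, 1/(α₁*β₂);
     1, 1/β₁, 1/α₂, 1/(β₁*α₂)]

/-- R = V·P. -/
theorem stmt_18 (α₁ α₂ β₁ β₂ : ℂ)
    (h1 : α₁ ≠ 0) (h2 : α₂ ≠ 0) (h3 : β₁ ≠ 0) (h4 : β₂ ≠ 0) :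
    Rmat α₁ α₂ β₁ β₂ = Vmat α₁ α₂ β₁ β₂ * Pmat α₁ α₂ β₁ β₂ := by
  have e2 : (2:ℂ) ≠ 0 := two_ne_zero
  ext i j
  fin_cases i <;> fin_cases j <;>
    simp [Rmat, Vmat, Pmat, lam, Matrix.mul_apply, Fin.sum_univ_four, Matrix.vecHead, Matrix.vecTail] <;>
    field_simp <;> ring
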